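/- arXiv:1902.03557 — 9 statements merged into one kernel-verified Lean document; each statement's English description precedes it below -/
import Mathlib

section
/- Let k be a positive integer and let S be a piecewise syndetic subset of the integers ℤ. Then the set {(a,d) ∈ ℤ × ℤ : a, a+d, a+2d, …, a+kd ∈ S} is piecewise syndetic in the additive group ℤ². -/
/-- `A` is thick in an additive commutative semigroup: every finite nonempty set
can be translated into `A`. -/
def Thick {T : Type*} [AddCommSemigroup T] (A : Set T) : Prop :=
  ∀ E : Finset T, E.Nonempty → ∃ z : T, ∀ e ∈ E, e + z ∈ A

/-- `A` is piecewise syndetic: there is a finite nonempty set `G` such that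
`⋃_{g ∈ G} (-g + A)` is thick. -/
def PiecewiseSyndetic {T : Type*} [AddCommSemigroup T] (A : Set T) : Prop :=
  ∃ G : Finset T, G.Nonempty ∧ Thick {s : T | ∃ g ∈ G, g + s ∈ A}

/-!
A set is piecewise syndetic iff it belongs to some ultrafilter in the smallest ideal `K(βG)` of
the compact right topological semigroup `βG`. The maps `ψᵢ(a, d) = a + i d` extend to a
continuous homomorphism `Φ : β(ℤ²) → (βℤ)^{k+1}`. Let `S ∈ p ∈ K(βℤ)`. The diagonal point
`p̄ = (p, …, p)` lies in `K((βℤ)^{k+1})`, and it is the image under `Φ` of the push-forward of `p`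
along `a ↦ (a, 0)`. An idempotent `f` in a minimal left ideal of the compact semigroup `Φ(β(ℤ²))`
chosen inside the minimal left ideal of `p̄` satisfies `p̄ + f = p̄`, and `f ∈ Φ(K(β(ℤ²)))` because
`Φ(K(β(ℤ²)))` is an ideal of `Φ(β(ℤ²))`. Hence `p̄ = Φ q` with `q ∈ K(β(ℤ²))`, so every set
`{(a, d) | a + i d ∈ S}` belongs to `q`, and so does their intersection.
-/

open Set Filter

attribute [local instance] Ultrafilter.add Ultrafilter.addSemigroup

section LeftIdeal

variable {X : Type*} [AddSemigroup X] [TopologicalSpace X] {T : AddSubsemigroup X} {L : Set X}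

structure IsClosedLeftIdeal (T : AddSubsemigroup X) (L : Set X) : Prop where
  nonempty : L.Nonempty
  isClosed : IsClosed L
  subset : L ⊆ T
  add_mem : ∀ t ∈ T, ∀ l ∈ L, t + l ∈ L

abbrev IsMinimalClosedLeftIdeal (T : AddSubsemigroup X) (L : Set X) : Prop :=
  Minimal (IsClosedLeftIdeal T) L

/-- The smallest ideal `K(T)` of Hindman–Strauss, as the union of the minimal closed left ideals. -/
def smallestIdeal (T : AddSubsemigroup X) : Set X :=
  ⋃₀ {L | IsMinimalClosedLeftIdeal T L}

theorem mem_smallestIdeal {x : X} :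
    x ∈ smallestIdeal T ↔ ∃ L, IsMinimalClosedLeftIdeal T L ∧ x ∈ L :=
  mem_sUnion

theorem IsClosedLeftIdeal.exists_minimal_subset [CompactSpace X] {L₀ : Set X}
    (h : IsClosedLeftIdeal T L₀) : ∃ L ⊆ L₀, IsMinimalClosedLeftIdeal T L := by
  refine zorn_superset_nonempty {L | IsClosedLeftIdeal T L} ?_ L₀ h
  rintro c hc hchain ⟨L₁, hL₁⟩
  have : Nonempty c := ⟨⟨L₁, hL₁⟩⟩
  have hdir : IsChain (· ⊇ ·) c := hchain.symm
  refine ⟨⋂₀ c, ⟨?_, isClosed_sInter fun L hL ↦ (hc hL).isClosed,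
    (sInter_subset_of_mem hL₁).trans (hc hL₁).subset,
    fun t ht l hl ↦ mem_sInter.2 fun L hL ↦ (hc hL).add_mem t ht l (hl L hL)⟩,
    fun L hL ↦ sInter_subset_of_mem hL⟩
  exact IsCompact.nonempty_sInter_of_directed_nonempty_isCompact_isClosed
    hdir.directedOn (fun L hL ↦ (hc hL).nonempty)
    (fun L hL ↦ (hc hL).isClosed.isCompact) (fun L hL ↦ (hc hL).isClosed)

theorem smallestIdeal_nonempty [CompactSpace X] (hT : IsClosed (T : Set X))
    (hne : (T : Set X).Nonempty) : (smallestIdeal T).Nonempty := by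
  obtain ⟨L, -, hL⟩ := IsClosedLeftIdeal.exists_minimal_subset
    ⟨hne, hT, subset_rfl, fun t ht _ hl ↦ T.add_mem ht hl⟩
  obtain ⟨x, hx⟩ := hL.prop.nonempty
  exact ⟨x, mem_smallestIdeal.2 ⟨L, hL, hx⟩⟩

theorem add_mem_smallestIdeal_left {t x : X} (ht : t ∈ T) (hx : x ∈ smallestIdeal T) :
    t + x ∈ smallestIdeal T := by
  obtain ⟨L, hL, hxL⟩ := mem_smallestIdeal.1 hx
  exact mem_smallestIdeal.2 ⟨L, hL, hL.prop.add_mem t ht x hxL⟩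

variable [T2Space X]

theorem IsMinimalClosedLeftIdeal.image_add_right_eq (hc : ∀ b : X, Continuous (· + b))
    (hT : IsCompact (T : Set X)) (hL : IsMinimalClosedLeftIdeal T L) {y : X} (hy : y ∈ L) :
    (· + y) '' T = L := by
  have hyT : y ∈ T := hL.prop.subset hy
  refine hL.eq_of_subset ⟨⟨y + y, y, hyT, rfl⟩, (hT.image (hc y)).isClosed, ?_, ?_⟩ ?_
  · rintro _ ⟨t, ht, rfl⟩
    exact T.add_mem ht hyT
  · rintro t ht _ ⟨t', ht', rfl⟩
    exact ⟨t + t', T.add_mem ht ht', add_assoc t t' y⟩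
  · rintro _ ⟨t, ht, rfl⟩
    exact hL.prop.add_mem t ht y hy

theorem IsMinimalClosedLeftIdeal.exists_add_eq (hc : ∀ b : X, Continuous (· + b))
    (hT : IsCompact (T : Set X)) (hL : IsMinimalClosedLeftIdeal T L) {x y : X} (hx : x ∈ L)
    (hy : y ∈ L) : ∃ t ∈ T, t + y = x := by
  rwa [← hL.image_add_right_eq hc hT hy] at hx

theorem IsMinimalClosedLeftIdeal.add_eq_self_of_idempotent (hc : ∀ b : X, Continuous (· + b))
    (hT : IsCompact (T : Set X)) (hL : IsMinimalClosedLeftIdeal T L) {f x : X} (hf : f ∈ L)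
    (hff : f + f = f) (hx : x ∈ L) : x + f = x := by
  obtain ⟨t, -, rfl⟩ := hL.exists_add_eq hc hT hx hf
  rw [add_assoc, hff]

theorem IsMinimalClosedLeftIdeal.image_add_right (hc : ∀ b : X, Continuous (· + b))
    (hT : IsCompact (T : Set X)) (hL : IsMinimalClosedLeftIdeal T L) {r : X} (hr : r ∈ T) :
    IsMinimalClosedLeftIdeal T ((· + r) '' L) := by
  have hLc : IsCompact L := hT.of_isClosed_subset hL.prop.isClosed hL.prop.subset
  refine ⟨⟨hL.prop.nonempty.image _, (hLc.image (hc r)).isClosed, ?_, ?_⟩, ?_⟩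
  · rintro _ ⟨l, hl, rfl⟩
    exact T.add_mem (hL.prop.subset hl) hr
  · rintro t ht _ ⟨l, hl, rfl⟩
    exact ⟨t + l, hL.prop.add_mem t ht l hl, add_assoc t l r⟩
  · intro L' hL' hL'sub
    obtain ⟨_, hz⟩ := hL'.nonempty
    obtain ⟨y, hy, rfl⟩ := hL'sub hz
    rintro _ ⟨l, hl, rfl⟩
    obtain ⟨t, ht, rfl⟩ := hL.exists_add_eq hc hT hl hy
    simpa only [add_assoc] using hL'.add_mem t ht _ hz

theorem add_mem_smallestIdeal_right (hc : ∀ b : X, Continuous (· + b))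
    (hT : IsCompact (T : Set X)) {x t : X} (hx : x ∈ smallestIdeal T) (ht : t ∈ T) :
    x + t ∈ smallestIdeal T := by
  obtain ⟨L, hL, hxL⟩ := mem_smallestIdeal.1 hx
  exact mem_smallestIdeal.2 ⟨_, hL.image_add_right hc hT ht, x, hxL, rfl⟩

theorem smallestIdeal_subset (hc : ∀ b : X, Continuous (· + b)) (hT : IsCompact (T : Set X))
    {M : Set X} (hM : M.Nonempty) (hMT : M ⊆ T) (hleft : ∀ t ∈ T, ∀ m ∈ M, t + m ∈ M)
    (hright : ∀ m ∈ M, ∀ t ∈ T, m + t ∈ M) : smallestIdeal T ⊆ M := by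
  intro x hx
  obtain ⟨L, hL, hxL⟩ := mem_smallestIdeal.1 hx
  obtain ⟨m, hm⟩ := hM
  -- `x = s + (m + x)` for some `s`, and `m + x ∈ M` because `M` is a right ideal
  obtain ⟨s, hs, hsx⟩ := hL.exists_add_eq hc hT hxL (hL.prop.add_mem m (hMT hm) x hxL)
  rw [← hsx]
  exact hleft s hs _ (hright m hm x (hL.prop.subset hxL))

end LeftIdeal

section Product

variable {X : Type*} [AddSemigroup X] [TopologicalSpace X] [CompactSpace X] [T2Space X]

theorem IsMinimalClosedLeftIdeal.pi (ι : Type*) (hc : ∀ b : X, Continuous (· + b)) {L : Set X}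
    (hL : IsMinimalClosedLeftIdeal ⊤ L) :
    IsMinimalClosedLeftIdeal (⊤ : AddSubsemigroup (ι → X)) (univ.pi fun _ ↦ L) := by
  obtain ⟨y₀, hy₀⟩ := hL.prop.nonempty
  refine ⟨⟨⟨fun _ ↦ y₀, fun _ _ ↦ hy₀⟩, isClosed_set_pi fun _ _ ↦ hL.prop.isClosed,
    subset_univ _, fun t _ l hl i _ ↦ hL.prop.add_mem (t i) trivial (l i) (hl i trivial)⟩, ?_⟩
  intro L' hL' hL'sub x hx
  obtain ⟨y, hy⟩ := hL'.nonempty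
  have hsolve (i : ι) : ∃ s, s + y i = x i := by
    obtain ⟨s, -, hs⟩ := hL.exists_add_eq hc isCompact_univ (hx i trivial) (hL'sub hy i trivial)
    exact ⟨s, hs⟩
  choose s hs using hsolve
  rw [show x = s + y from funext fun i ↦ (hs i).symm]
  exact hL'.add_mem s trivial y hy

theorem const_mem_smallestIdeal_pi (ι : Type*) (hc : ∀ b : X, Continuous (· + b)) {x : X}
    (hx : x ∈ smallestIdeal (⊤ : AddSubsemigroup X)) :
    (fun _ : ι ↦ x) ∈ smallestIdeal (⊤ : AddSubsemigroup (ι → X)) := by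
  obtain ⟨L, hL, hxL⟩ := mem_smallestIdeal.1 hx
  exact mem_smallestIdeal.2 ⟨_, hL.pi ι hc, fun _ _ ↦ hxL⟩

end Product

theorem smallestIdeal_inter_range_subset_image {Z Y : Type*} [AddSemigroup Z]
    [TopologicalSpace Z] [CompactSpace Z] [T2Space Z] [AddSemigroup Y] [TopologicalSpace Y]
    [CompactSpace Y] [T2Space Y] (Φ : Z →ₙ+ Y) (hΦ : Continuous Φ)
    (hcZ : ∀ b : Z, Continuous (· + b)) (hcY : ∀ b : Y, Continuous (· + b)) :
    smallestIdeal (⊤ : AddSubsemigroup Y) ∩ range Φ ⊆ Φ '' smallestIdeal ⊤ := by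
  rintro _ ⟨hyK, z, rfl⟩
  obtain ⟨LY, hLY, hyLY⟩ := mem_smallestIdeal.1 hyK
  set T := Φ.srange
  have hT : IsCompact (T : Set Y) := by
    rw [AddHom.coe_srange]
    exact isCompact_range hΦ
  have hTLY : IsClosedLeftIdeal T (T ∩ LY) :=
    ⟨⟨Φ z, ⟨z, rfl⟩, hyLY⟩, hT.isClosed.inter hLY.prop.isClosed, inter_subset_left,
      fun t ht l hl ↦ ⟨T.add_mem ht hl.1, hLY.prop.add_mem t trivial l hl.2⟩⟩
  obtain ⟨LT, hLTsub, hLT⟩ := hTLY.exists_minimal_subset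
  obtain ⟨f, hfLT, hff⟩ := exists_idempotent_in_compact_add_subsemigroup hcY LT
    hLT.prop.nonempty hLT.prop.isClosed.isCompact
    fun x hx y hy ↦ hLT.prop.add_mem x (hLT.prop.subset hx) y hy
  have hΦK : smallestIdeal T ⊆ Φ '' smallestIdeal ⊤ := by
    refine smallestIdeal_subset hcY hT
      ((smallestIdeal_nonempty (T := ⊤) isClosed_univ ⟨z, trivial⟩).image Φ) ?_ ?_ ?_
    · rintro _ ⟨q, -, rfl⟩
      exact ⟨q, rfl⟩
    · rintro _ ⟨r, rfl⟩ _ ⟨q, hq, rfl⟩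
      exact ⟨r + q, add_mem_smallestIdeal_left trivial hq, map_add Φ r q⟩
    · rintro _ ⟨q, hq, rfl⟩ _ ⟨r, rfl⟩
      exact ⟨q + r, add_mem_smallestIdeal_right hcZ isCompact_univ hq trivial, map_add Φ q r⟩
  obtain ⟨q, hq, hqf⟩ := hΦK (mem_smallestIdeal.2 ⟨LT, hLT, hfLT⟩)
  refine ⟨z + q, add_mem_smallestIdeal_left trivial hq, ?_⟩
  rw [map_add, hqf, hLY.add_eq_self_of_idempotent hcY isCompact_univ (hLTsub hfLT).2 hff hyLY]

namespace Ultrafilter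

variable {M N : Type*}

theorem mem_add_iff [Add M] {A : Set M} {U V : Ultrafilter M} :
    A ∈ U + V ↔ {x | {y | x + y ∈ A} ∈ V} ∈ U :=
  Iff.rfl

theorem mem_pure_add_iff [Add M] {A : Set M} {g : M} {V : Ultrafilter M} :
    A ∈ pure g + V ↔ {y | g + y ∈ A} ∈ V :=
  mem_pure

theorem continuous_map (φ : M → N) : Continuous (map φ) := by
  refine ultrafilterBasis_is_basis.continuous_iff.2 (forall_mem_range.2 fun s ↦ ?_)
  exact ultrafilter_isOpen_basic (φ ⁻¹' s)

def mapAddHom [Add M] [Add N] (φ : M →ₙ+ N) : Ultrafilter M →ₙ+ Ultrafilter N where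
  toFun := map φ
  map_add' U V := by
    ext A
    simp only [mem_map, mem_add_iff, Set.preimage, Set.mem_ofPred_eq, map_add]

end Ultrafilter

section PiecewiseSyndetic

variable {G : Type*} [AddCommSemigroup G]

theorem Thick.exists_ultrafilter [Nonempty G] {A : Set G} (hA : Thick A) :
    ∃ q : Ultrafilter G, ∀ x, {s | x + s ∈ A} ∈ q := by
  classical
  refine (Ultrafilter.exists_ultrafilter_of_finite_inter_nonempty _ fun Ts hTs ↦ ?_).imp
    fun q hq x ↦ hq (mem_range_self x)
  rcases Ts.eq_empty_or_nonempty with rfl | hTne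
  · simp
  choose! f hf using fun t (ht : t ∈ Ts) ↦ hTs ht
  obtain ⟨z, hz⟩ := hA (Ts.image f) (hTne.image f)
  refine ⟨z, mem_sInter.2 fun t ht ↦ ?_⟩
  rw [← hf t ht]
  exact hz (f t) (Finset.mem_image_of_mem f ht)

theorem PiecewiseSyndetic.exists_mem_smallestIdeal {S : Set G} (hS : PiecewiseSyndetic S) :
    ∃ p ∈ smallestIdeal (⊤ : AddSubsemigroup (Ultrafilter G)), S ∈ p := by
  obtain ⟨F, ⟨g₀, -⟩, hthick⟩ := hS
  have : Nonempty G := ⟨g₀⟩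
  obtain ⟨q₀, hq₀⟩ := hthick.exists_ultrafilter
  -- the left ideal `βG + q₀` consists of ultrafilters containing the thick set
  have hideal : IsClosedLeftIdeal ⊤ (range (· + q₀)) :=
    ⟨range_nonempty _, (isCompact_range (Ultrafilter.continuous_add_left q₀)).isClosed,
      subset_univ _, by rintro r - _ ⟨r', rfl⟩; exact ⟨r + r', add_assoc r r' q₀⟩⟩
  obtain ⟨L, hLsub, hL⟩ := hideal.exists_minimal_subset
  obtain ⟨q, hq⟩ := hL.prop.nonempty
  have hcover : {s | ∃ g ∈ F, g + s ∈ S} ∈ q := by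
    obtain ⟨r, rfl⟩ := hLsub hq
    exact Ultrafilter.mem_add_iff.2 (Filter.mem_of_superset univ_mem fun x _ ↦ hq₀ x)
  have hcover' : (⋃ g ∈ (F : Set G), {s | g + s ∈ S}) ∈ q :=
    Filter.mem_of_superset hcover fun s ⟨g, hg, hs⟩ ↦ mem_iUnion₂.2 ⟨g, hg, hs⟩
  obtain ⟨g, -, hg⟩ := (Ultrafilter.finite_biUnion_mem_iff F.finite_toSet).1 hcover'
  exact ⟨pure g + q, mem_smallestIdeal.2 ⟨L, hL, hL.prop.add_mem _ trivial q hq⟩,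
    Ultrafilter.mem_pure_add_iff.2 hg⟩

theorem IsMinimalClosedLeftIdeal.exists_finset_forall_mem {L : Set (Ultrafilter G)}
    (hL : IsMinimalClosedLeftIdeal ⊤ L) {p : Ultrafilter G} (hp : p ∈ L) {A : Set G}
    (hA : A ∈ p) : ∃ F : Finset G, F.Nonempty ∧ ∀ q ∈ L, ∃ x ∈ F, {s | x + s ∈ A} ∈ q := by
  have hcover : L ⊆ ⋃ x, {q : Ultrafilter G | {s | x + s ∈ A} ∈ q} := by
    intro q hq
    obtain ⟨r, -, rfl⟩ := hL.exists_add_eq Ultrafilter.continuous_add_left isCompact_univ hp hq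
    obtain ⟨x, hx⟩ := Ultrafilter.nonempty_of_mem (Ultrafilter.mem_add_iff.1 hA)
    exact mem_iUnion.2 ⟨x, hx⟩
  obtain ⟨F, hF⟩ := hL.prop.isClosed.isCompact.elim_finite_subcover _
    (fun x ↦ ultrafilter_isOpen_basic _) hcover
  refine ⟨F, ?_, fun q hq ↦ by simpa only [mem_iUnion₂, exists_prop, mem_ofPred_eq] using hF hq⟩
  obtain ⟨x, hx, -⟩ := mem_iUnion₂.1 (hF hp)
  exact ⟨x, hx⟩

theorem piecewiseSyndetic_of_mem_smallestIdeal {A : Set G} {p : Ultrafilter G}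
    (hp : p ∈ smallestIdeal ⊤) (hA : A ∈ p) : PiecewiseSyndetic A := by
  obtain ⟨L, hL, hpL⟩ := mem_smallestIdeal.1 hp
  obtain ⟨F, hFne, hF⟩ := hL.exists_finset_forall_mem hpL hA
  refine ⟨F, hFne, fun E _ ↦ ?_⟩
  -- every translate `pure e + p` lies in `L`, hence is caught by one of the sets `-x + A`
  have htranslate (e : G) : {z | ∃ x ∈ F, x + (e + z) ∈ A} ∈ p := by
    obtain ⟨x, hxF, hx⟩ := hF _ (hL.prop.add_mem (pure e) trivial p hpL)
    exact Filter.mem_of_superset (Ultrafilter.mem_pure_add_iff.1 hx) fun z hz ↦ ⟨x, hxF, hz⟩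
  have hinter : (⋂ e ∈ E, {z | ∃ x ∈ F, x + (e + z) ∈ A}) ∈ p :=
    (Filter.biInter_finset_mem E).2 fun e _ ↦ htranslate e
  obtain ⟨z, hz⟩ := Ultrafilter.nonempty_of_mem hinter
  exact ⟨z, fun e he ↦ mem_iInter₂.1 hz e he⟩

end PiecewiseSyndetic

theorem PiecewiseSyndetic.setOf_forall_apply_mem {G H ι : Type*} [AddCommSemigroup G]
    [AddCommSemigroup H] [Finite ι] (ψ : ι → G →ₙ+ H) (σ : H → G)
    (hσ : ∀ i a, ψ i (σ a) = a) {S : Set H} (hS : PiecewiseSyndetic S) :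
    PiecewiseSyndetic {g | ∀ i, ψ i g ∈ S} := by
  obtain ⟨p, hpK, hSp⟩ := hS.exists_mem_smallestIdeal
  let Φ : Ultrafilter G →ₙ+ (ι → Ultrafilter H) :=
    AddHom.pi fun i ↦ Ultrafilter.mapAddHom (ψ i)
  have hΦ : Continuous Φ := continuous_pi fun i ↦ Ultrafilter.continuous_map (ψ i)
  have hdiag : Φ (Ultrafilter.map σ p) = fun _ ↦ p := funext fun i ↦ by
    simp [Φ, Ultrafilter.mapAddHom, Ultrafilter.map_map, Function.comp_def, hσ]
  have hdiagK : (fun _ : ι ↦ p) ∈ smallestIdeal ⊤ :=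
    const_mem_smallestIdeal_pi ι Ultrafilter.continuous_add_left hpK
  obtain ⟨q, hqK, hq⟩ := smallestIdeal_inter_range_subset_image Φ hΦ
    Ultrafilter.continuous_add_left
    (fun b ↦ continuous_pi fun i ↦ (Ultrafilter.continuous_add_left (b i)).comp
      (continuous_apply i))
    ⟨hdiagK, _, hdiag⟩
  refine piecewiseSyndetic_of_mem_smallestIdeal hqK ?_
  have hmem (i : ι) : ψ i ⁻¹' S ∈ q := by
    change S ∈ Φ q i
    rw [hq]
    exact hSp
  exact Filter.mem_of_superset ((Filter.iInter_mem (f := (q : Filter G))).2 hmem)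
    fun g hg i ↦ mem_iInter.1 hg i

theorem stmt0_general (k : ℕ) (S : Set ℤ) (hS : PiecewiseSyndetic S) :
    PiecewiseSyndetic {p : ℤ × ℤ | ∀ i : ℕ, i ≤ k → p.1 + (i : ℤ) * p.2 ∈ S} := by
  let ψ (i : Fin (k + 1)) : ℤ × ℤ →ₙ+ ℤ :=
    ⟨fun p ↦ p.1 + (i : ℤ) * p.2, fun p q ↦ by simp only [Prod.fst_add, Prod.snd_add]; ring⟩
  convert hS.setOf_forall_apply_mem ψ (fun a ↦ (a, 0)) (fun i a ↦ by simp [ψ]) using 3 with p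
  exact ⟨fun h i ↦ h i (Nat.le_of_lt_succ i.2), fun h i hi ↦ h ⟨i, Nat.lt_succ_of_le hi⟩⟩

/-- Furstenberg–Glasner: if `S ⊆ ℤ` is piecewise syndetic and `k ≥ 1`, then the set of
pairs `(a, d)` with `a, a + d, …, a + k·d ∈ S` is piecewise syndetic in `ℤ²`. -/
theorem stmt0 (k : ℕ) (hk : 0 < k) (S : Set ℤ) (hS : PiecewiseSyndetic S) :
    PiecewiseSyndetic {p : ℤ × ℤ | ∀ i : ℕ, i ≤ k → p.1 + (i : ℤ) * p.2 ∈ S} :=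
  stmt0_general k S hS
end

section
/- Let (S,·) be a semigroup, let l be a positive integer, let E be a subsemigroup of the direct product S^l that contains the diagonal {(a,a,…,a) : a ∈ S}, and let I be a (two-sided) ideal of E. If M is a piecewise syndetic subset of S, then M^l ∩ I is piecewise syndetic in the semigroup I. -/
/-- `A` is thick relative to the subsemigroup `I` of `T`. -/
def MulThickIn {T : Type*} [Semigroup T] (I A : Set T) : Prop :=
  ∀ E : Finset T, ↑E ⊆ I → E.Nonempty → ∃ x ∈ I, ∀ e ∈ E, e * x ∈ A

/-- `A` is piecewise syndetic relative to the subsemigroup `I` of `T`. -/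
def MulPiecewiseSyndeticIn {T : Type*} [Semigroup T] (I A : Set T) : Prop :=
  ∃ G : Finset T, ↑G ⊆ I ∧ G.Nonempty ∧
    MulThickIn I {s ∈ I | ∃ g ∈ G, g * s ∈ A}

/-- `A` is piecewise syndetic in the semigroup `T`. -/
def MulPiecewiseSyndetic {T : Type*} [Semigroup T] (A : Set T) : Prop :=
  MulPiecewiseSyndeticIn Set.univ A

/-!
Work in the Stone–Čech compactification `βT` of ultrafilters, with the product extended from `T`.
A piecewise syndetic `M ⊆ S` belongs to some `p` in a minimal closed left ideal `L₀` of `βS`.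
Push `p` to the diagonal `q ∈ cl E ⊆ β(S^l)`, choose an idempotent `e` in a minimal closed left
ideal `L ⊆ (cl E) q` of `cl E`, and put `r = q e ∈ L`. Each coordinate projection of `e` is an
idempotent of `L₀`, hence a right identity for `p`, so every coordinate of `r` is `p` and
`M^l ∈ r`. The minimal left ideal `L` lies inside the ideal `cl I`, so `M^l ∩ I ∈ r`; finally
`L = L r` is compact, which turns membership in `r` into piecewise syndeticity in `I`.
-/

attribute [local instance] Ultrafilter.mul Ultrafilter.semigroup

open Filter

namespace Ultrafilter

variable {α β : Type*} [Semigroup α] [Semigroup β]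

theorem mem_mul_iff {U V : Ultrafilter α} {s : Set α} :
    s ∈ U * V ↔ {m | {n | m * n ∈ s} ∈ V} ∈ U :=
  Iff.rfl

theorem map_mul (φ : α →ₙ* β) (U V : Ultrafilter α) :
    map φ (U * V) = map φ U * map φ V := by
  ext s
  simp [mem_mul_iff, _root_.map_mul]

end Ultrafilter

section ClosedLeftIdeal

variable {α : Type*} [Semigroup α]

def Subsemigroup.ultrafilterClosure (E : Subsemigroup α) : Subsemigroup (Ultrafilter α) where
  carrier := {x | (E : Set α) ∈ x}
  mul_mem' {_ _} hx hy :=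
    mem_of_superset hx fun _ hm => mem_of_superset hy fun _ hn => E.mul_mem hm hn

theorem Subsemigroup.isClosed_ultrafilterClosure (E : Subsemigroup α) :
    IsClosed (E.ultrafilterClosure : Set (Ultrafilter α)) :=
  ultrafilter_isClosed_basic _

structure IsClosedLeftIdeal_s1 (Y : Subsemigroup (Ultrafilter α)) (L : Set (Ultrafilter α)) :
    Prop where
  nonempty : L.Nonempty
  isClosed : IsClosed L
  subset : L ⊆ Y
  mul_mem : ∀ y ∈ Y, ∀ v ∈ L, y * v ∈ L

variable {Y : Subsemigroup (Ultrafilter α)} {K L : Set (Ultrafilter α)}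

theorem isClosedLeftIdeal_self {v : Ultrafilter α} (hv : v ∈ Y)
    (hY : IsClosed (Y : Set (Ultrafilter α))) : IsClosedLeftIdeal_s1 Y Y :=
  ⟨⟨v, hv⟩, hY, subset_rfl, fun _ hy _ hv => Y.mul_mem hy hv⟩

namespace IsClosedLeftIdeal_s1

theorem image_mul_right (hK : IsClosedLeftIdeal_s1 Y K) {v : Ultrafilter α} (hv : v ∈ Y) :
    IsClosedLeftIdeal_s1 Y ((· * v) '' K) where
  nonempty := hK.nonempty.image _
  isClosed := (hK.isClosed.isCompact.image (Ultrafilter.continuous_mul_left v)).isClosed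
  subset := by
    rintro _ ⟨k, hk, rfl⟩
    exact Y.mul_mem (hK.subset hk) hv
  mul_mem := by
    rintro y hy _ ⟨k, hk, rfl⟩
    exact ⟨y * k, hK.mul_mem y hy k hk, mul_assoc y k v⟩

theorem exists_idempotent (hL : IsClosedLeftIdeal_s1 Y L) : ∃ e ∈ L, e * e = e :=
  exists_idempotent_in_compact_subsemigroup Ultrafilter.continuous_mul_left L hL.nonempty
    hL.isClosed.isCompact fun x hx y hy => hL.mul_mem x (hL.subset hx) y hy

theorem sInter_of_isChain {c : Set (Set (Ultrafilter α))} (hc : ∀ L ∈ c, IsClosedLeftIdeal_s1 Y L)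
    (hchain : IsChain (· ⊆ ·) c) (hne : c.Nonempty) : IsClosedLeftIdeal_s1 Y (⋂₀ c) where
  nonempty :=
    have : Nonempty c := hne.to_subtype
    have hdir : DirectedOn (· ⊇ ·) c := fun a ha b hb =>
      (hchain.total ha hb).elim (fun h => ⟨a, ha, subset_rfl, h⟩) fun h => ⟨b, hb, h, subset_rfl⟩
    IsCompact.nonempty_sInter_of_directed_nonempty_isCompact_isClosed hdir
      (fun L hL => (hc L hL).nonempty) (fun L hL => (hc L hL).isClosed.isCompact)
      fun L hL => (hc L hL).isClosed
  isClosed := isClosed_sInter fun L hL => (hc L hL).isClosed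
  subset := (Set.sInter_subset_of_mem hne.some_mem).trans (hc _ hne.some_mem).subset
  mul_mem y hy v hv := Set.mem_sInter.2 fun L hL => (hc L hL).mul_mem y hy v (hv L hL)

theorem exists_minimal_subset_s1 (hK : IsClosedLeftIdeal_s1 Y K) :
    ∃ L ⊆ K, Minimal (IsClosedLeftIdeal_s1 Y) L := by
  have hchain (c) (hc : c ⊆ {L | IsClosedLeftIdeal_s1 Y L ∧ L ⊆ K}) (hchain : IsChain (· ⊆ ·) c)
      (hne : c.Nonempty) : ∃ L ∈ {L | IsClosedLeftIdeal_s1 Y L ∧ L ⊆ K}, ∀ L' ∈ c, L ⊆ L' :=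
    ⟨⋂₀ c, ⟨sInter_of_isChain (fun L hL => (hc hL).1) hchain hne,
      (Set.sInter_subset_of_mem hne.some_mem).trans (hc hne.some_mem).2⟩,
      fun _ => Set.sInter_subset_of_mem⟩
  obtain ⟨L, hLK, hL⟩ := zorn_superset_nonempty _ hchain K ⟨hK, subset_rfl⟩
  exact ⟨L, hLK, hL.prop.1, fun L' hL' hL'L => hL.le_of_le ⟨hL', hL'L.trans hLK⟩ hL'L⟩

end IsClosedLeftIdeal_s1

variable (hL : Minimal (IsClosedLeftIdeal_s1 Y) L)
include hL

theorem Minimal.image_mul_right_eq {v : Ultrafilter α} (hv : v ∈ L) : (· * v) '' L = L :=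
  hL.eq_of_le (hL.prop.image_mul_right (hL.prop.subset hv))
    (by rintro _ ⟨k, hk, rfl⟩; exact hL.prop.mul_mem k (hL.prop.subset hk) v hv)

theorem Minimal.mul_eq_self_of_idempotent {e p : Ultrafilter α} (he : e ∈ L) (hee : e * e = e)
    (hp : p ∈ L) : p * e = p := by
  obtain ⟨u, -, rfl⟩ := (hL.image_mul_right_eq he).symm ▸ hp
  simp only [mul_assoc, hee]

theorem Minimal.subset_of_isIdeal {J : Set (Ultrafilter α)} (hJ : J.Nonempty) (hJY : J ⊆ Y)
    (hJl : ∀ y ∈ Y, ∀ u ∈ J, y * u ∈ J) (hJr : ∀ u ∈ J, ∀ y ∈ Y, u * y ∈ J) : L ⊆ J := by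
  obtain ⟨v, hv⟩ := hL.prop.nonempty
  obtain ⟨u, hu⟩ := hJ
  rw [← hL.image_mul_right_eq (hL.prop.mul_mem u (hJY hu) v hv)]
  rintro _ ⟨k, hk, rfl⟩
  exact hJl k (hL.prop.subset hk) _ (hJr u hu v (hL.prop.subset hv))

theorem Minimal.exists_finset_forall_mem {I A : Set α} (hLI : ∀ x ∈ L, I ∈ x)
    {r : Ultrafilter α} (hr : r ∈ L) (hA : A ∈ r) :
    ∃ Γ : Finset α, ↑Γ ⊆ I ∧ Γ.Nonempty ∧ ∀ v ∈ L, ∃ a ∈ Γ, {n | a * n ∈ A} ∈ v := by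
  have hcover : L ⊆ ⋃ a ∈ I, {v | {n | a * n ∈ A} ∈ v} := by
    intro v hv
    obtain ⟨u, hu, rfl⟩ := (hL.image_mul_right_eq hv).symm ▸ hr
    rw [Ultrafilter.mem_mul_iff] at hA
    obtain ⟨a, haA, haI⟩ := Ultrafilter.nonempty_of_mem (inter_mem hA (hLI u hu))
    exact Set.mem_biUnion haI haA
  obtain ⟨Γ, hΓI, hΓ, hΓcover⟩ := hL.prop.isClosed.isCompact.elim_finite_subcover_image
    (fun _ _ => ultrafilter_isOpen_basic _) hcover
  have hΓL : ∀ v ∈ L, ∃ a ∈ hΓ.toFinset, {n | a * n ∈ A} ∈ v := fun v hv => by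
    simpa using hΓcover hv
  obtain ⟨a, ha, -⟩ := hΓL r hr
  exact ⟨hΓ.toFinset, by simpa using hΓI, ⟨a, ha⟩, hΓL⟩

end ClosedLeftIdeal

section PiecewiseSyndetic

variable {T : Type*} [Semigroup T]

theorem MulThickIn.exists_ultrafilter [Nonempty T] {A : Set T} (h : MulThickIn Set.univ A) :
    ∃ y : Ultrafilter T, ∀ t, {s | t * s ∈ A} ∈ y := by
  classical
  have hfin (𝒯 : Finset (Set T)) (h𝒯 : ↑𝒯 ⊆ Set.range fun t => {s | t * s ∈ A}) :
      (⋂₀ (𝒯 : Set (Set T))).Nonempty := by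
    rw [← Set.image_univ, Finset.subset_set_image_iff] at h𝒯
    obtain ⟨F, -, rfl⟩ := h𝒯
    rcases F.eq_empty_or_nonempty with rfl | hF
    · simp
    obtain ⟨x, -, hx⟩ := h F (Set.subset_univ _) hF
    exact ⟨x, by simpa using hx⟩
  obtain ⟨y, hy⟩ := Ultrafilter.exists_ultrafilter_of_finite_inter_nonempty _ hfin
  exact ⟨y, fun t => hy ⟨t, rfl⟩⟩

theorem MulPiecewiseSyndetic.exists_mem_minimal {M : Set T} (hM : MulPiecewiseSyndetic M) :
    ∃ L, Minimal (IsClosedLeftIdeal_s1 (⊤ : Subsemigroup (Ultrafilter T))) L ∧ ∃ p ∈ L, M ∈ p := by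
  obtain ⟨G, -, ⟨g₀, -⟩, hthick⟩ := hM
  have : Nonempty T := ⟨g₀⟩
  obtain ⟨y, hy⟩ := hthick.exists_ultrafilter
  obtain ⟨L, hLy, hL⟩ := ((isClosedLeftIdeal_self (Subsemigroup.mem_top y)
    isClosed_univ).image_mul_right (Subsemigroup.mem_top y)).exists_minimal_subset_s1
  obtain ⟨p, hp⟩ := hL.prop.nonempty
  have hGp : (⋃ g ∈ (G : Set T), {s | g * s ∈ M}) ∈ p := by
    obtain ⟨u, -, rfl⟩ := hLy hp
    refine Ultrafilter.mem_mul_iff.2 <|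
      mem_of_superset univ_mem fun m _ => mem_of_superset (hy m) fun s hs => ?_
    simpa using hs
  obtain ⟨g, -, hg⟩ := (Ultrafilter.finite_biUnion_mem_iff G.finite_toSet).1 hGp
  exact ⟨L, hL, pure g * p, hL.prop.mul_mem _ (Subsemigroup.mem_top _) p hp, hg⟩

variable {E : Subsemigroup T} {L : Set (Ultrafilter T)}
  (hL : Minimal (IsClosedLeftIdeal_s1 E.ultrafilterClosure) L) {I : Set T} (hIE : I ⊆ E)
  (hIr : ∀ i ∈ I, ∀ e ∈ E, i * e ∈ I)
include hL hIE hIr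

theorem Minimal.mem_of_isIdeal (hI : I.Nonempty) (hIl : ∀ e ∈ E, ∀ i ∈ I, e * i ∈ I)
    {x : Ultrafilter T} (hx : x ∈ L) : I ∈ x := by
  obtain ⟨i, hi⟩ := hI
  refine hL.subset_of_isIdeal (J := {u | I ∈ u}) ⟨pure i, hi⟩
    (fun u hu => mem_of_superset hu hIE) (fun y hy u hu => ?_) (fun u hu y hy => ?_) hx
  · exact mem_of_superset hy fun e he => mem_of_superset hu fun i hi => hIl e he i hi
  · exact mem_of_superset hu fun i hi => mem_of_superset hy fun e he => hIr i hi e he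

theorem Minimal.mulPiecewiseSyndeticIn
    (hLI : ∀ x ∈ L, I ∈ x) {r : Ultrafilter T} (hr : r ∈ L) {A : Set T} (hA : A ∈ r) :
    MulPiecewiseSyndeticIn I A := by
  obtain ⟨Γ, hΓI, hΓ, hΓL⟩ := hL.exists_finset_forall_mem hLI hr hA
  refine ⟨Γ, hΓI, hΓ, fun F hFI _ => ?_⟩
  have hF (f) (hf : f ∈ F) : ∃ a ∈ Γ, {n | a * (f * n) ∈ A} ∈ r :=
    hΓL _ (hL.prop.mul_mem (pure f) (hIE (hFI hf)) r hr)
  choose! a haΓ ha using hF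
  obtain ⟨x, hxI, hx⟩ :=
    Ultrafilter.nonempty_of_mem (inter_mem (hLI r hr) ((biInter_finset_mem F).2 ha))
  exact ⟨x, hxI, fun f hf =>
    ⟨hIr f (hFI hf) x (hIE hxI), a f, haΓ f hf, Set.mem_iInter₂.1 hx f hf⟩⟩

end PiecewiseSyndetic

theorem Minimal.map_mul_idempotent_eq {T S : Type*} [Semigroup T] [Semigroup S] (φ : T →ₙ* S)
    {L : Set (Ultrafilter S)} (hL : Minimal (IsClosedLeftIdeal_s1 ⊤) L) {q e : Ultrafilter T}
    (hq : q.map φ ∈ L) (he : e ∈ Set.range (· * q)) (hee : e * e = e) :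
    (q * e).map φ = q.map φ := by
  obtain ⟨z, rfl⟩ := he
  have hzq : (z * q).map φ ∈ L := by
    rw [Ultrafilter.map_mul]
    exact hL.prop.mul_mem _ (Subsemigroup.mem_top _) _ hq
  rw [Ultrafilter.map_mul]
  exact hL.mul_eq_self_of_idempotent hzq (by rw [← Ultrafilter.map_mul, hee]) hq

theorem stmt1_general {S : Type*} [Semigroup S] (l : ℕ)
    (E : Set (Fin l → S)) (hEmul : ∀ a ∈ E, ∀ b ∈ E, a * b ∈ E)
    (hdiag : ∀ a : S, (fun _ => a) ∈ E)
    (I : Set (Fin l → S)) (hIsub : I ⊆ E) (hIne : I.Nonempty)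
    (hIdeal : ∀ e ∈ E, ∀ i ∈ I, e * i ∈ I ∧ i * e ∈ I)
    (M : Set S) (hM : MulPiecewiseSyndetic M) :
    MulPiecewiseSyndeticIn I ({f : Fin l → S | ∀ j, f j ∈ M} ∩ I) := by
  let E' : Subsemigroup (Fin l → S) := ⟨E, fun ha hb => hEmul _ ha _ hb⟩
  have hIl (e) (he : e ∈ E) (i) (hi : i ∈ I) : e * i ∈ I := (hIdeal e he i hi).1
  have hIr (i) (hi : i ∈ I) (e) (he : e ∈ E) : i * e ∈ I := (hIdeal e he i hi).2
  obtain ⟨L₀, hL₀, p, hpL₀, hMp⟩ := hM.exists_mem_minimal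
  set q := p.map (Pi.constMulHom (Fin l) S)
  have hq : q ∈ E'.ultrafilterClosure := Ultrafilter.mem_map.2 (univ_mem' hdiag)
  obtain ⟨L, hLq, hL⟩ := ((isClosedLeftIdeal_self hq
    E'.isClosed_ultrafilterClosure).image_mul_right hq).exists_minimal_subset_s1
  obtain ⟨e, heL, hee⟩ := hL.prop.exists_idempotent
  have hqe : q * e ∈ L := hL.prop.mul_mem q hq e heL
  have hLI (x) (hx : x ∈ L) : I ∈ x := hL.mem_of_isIdeal hIsub hIr hIne hIl hx
  have hcoord (j : Fin l) : (q * e).map (Pi.evalMulHom (fun _ => S) j) = p := by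
    have hqj : q.map (Pi.evalMulHom (fun _ => S) j) = p := by
      simp only [q, Ultrafilter.map_map]
      exact p.map_id
    obtain ⟨z, -, hz⟩ := hLq heL
    rw [hL₀.map_mul_idempotent_eq _ (hqj ▸ hpL₀) ⟨z, hz⟩ hee, hqj]
  refine hL.mulPiecewiseSyndeticIn hIsub hIr hLI hqe (inter_mem ?_ (hLI _ hqe))
  simp only [Set.ofPred_forall]
  exact iInter_mem.2 fun j => Ultrafilter.mem_map.1 (hcoord j ▸ hMp)

/-- Bergelson–Hindman: if `E` is a subsemigroup of `S^l` containing the diagonal,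
`I` is a two-sided ideal of `E`, and `M ⊆ S` is piecewise syndetic, then
`M^l ∩ I` is piecewise syndetic in the semigroup `I`. -/
theorem stmt1 {S : Type*} [Semigroup S] (l : ℕ) (hl : 0 < l)
    (E : Set (Fin l → S)) (hEmul : ∀ a ∈ E, ∀ b ∈ E, a * b ∈ E)
    (hdiag : ∀ a : S, (fun _ => a) ∈ E)
    (I : Set (Fin l → S)) (hIsub : I ⊆ E) (hIne : I.Nonempty)
    (hIdeal : ∀ e ∈ E, ∀ i ∈ I, e * i ∈ I ∧ i * e ∈ I)
    (M : Set S) (hM : MulPiecewiseSyndetic M) :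
    MulPiecewiseSyndeticIn I ({f : Fin l → S | ∀ j, f j ∈ M} ∩ I) :=
  stmt1_general l E hEmul hdiag I hIsub hIne hIdeal M hM
end

section
/- (Hales–Jewett) For all positive integers t and r there exists a number N₀ = HJ(r,t) such that whenever N ≥ N₀ and the set [t]^N of words of length N over the alphabet [t] = {1,2,…,t} is colored with r colors, there exists a monochromatic combinatorial line. -/
/-!
Mathlib's Hales–Jewett theorem provides a finite dimension `ι` in which every `r`-colouring of
`ι → [t]` has a monochromatic line. Monochromatic lines persist in higher dimension: embed `ι`
into `Fin N`, fix the extra coordinates to a constant letter, and extend the line by that letter.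
-/

namespace Combinatorics.Line

variable {α ι ι' κ : Type*}

noncomputable def extend (l : Line α ι) (f : ι ↪ ι') (a : α) : Line α ι' where
  idxFun := Function.extend f l.idxFun fun _ => some a
  proper := by
    obtain ⟨i, hi⟩ := l.proper
    exact ⟨f i, by rw [f.injective.extend_apply, hi]⟩

theorem extend_apply (l : Line α ι) (f : ι ↪ ι') (a x : α) :
    l.extend f a x = Function.extend f (l x) fun _ => a := by
  funext j
  by_cases hj : ∃ i, f i = j
  · obtain ⟨i, rfl⟩ := hj
    simp only [coe_apply, extend, f.injective.extend_apply]
  · simp only [coe_apply, extend, Function.extend_apply' _ _ _ hj, Option.getD_some]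

theorem exists_mono_of_embedding (f : ι ↪ ι') (a : α)
    (h : ∀ C : (ι → α) → κ, ∃ l : Line α ι, l.IsMono C) (C : (ι' → α) → κ) :
    ∃ l : Line α ι', l.IsMono C := by
  obtain ⟨l, c, hc⟩ := h fun x => C (Function.extend f x fun _ => a)
  exact ⟨l.extend f a, c, fun x => by rw [extend_apply]; exact hc x⟩

end Combinatorics.Line

theorem stmt2_general (t r : ℕ) (ht : 0 < t) :
    ∃ N₀ : ℕ, ∀ N : ℕ, N₀ ≤ N → ∀ χ : (Fin N → Fin t) → Fin r,
      ∃ w : Fin N → Option (Fin t), (∃ j, w j = none) ∧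
        ∃ c : Fin r, ∀ i : Fin t, χ (fun j => (w j).getD i) = c := by
  obtain ⟨ι, _, hι⟩ := Combinatorics.Line.exists_mono_in_high_dimension (Fin t) (Fin r)
  refine ⟨Fintype.card ι, fun N hN χ => ?_⟩
  let f : ι ↪ Fin N := (Fintype.equivFin ι).toEmbedding.trans (Fin.castLEEmb hN)
  obtain ⟨l, c, hc⟩ := Combinatorics.Line.exists_mono_of_embedding f ⟨0, ht⟩ hι χ
  exact ⟨l.idxFun, l.proper, c, hc⟩

/-- Hales–Jewett theorem: for all `t, r ≥ 1` there is `N₀` such that for every `N ≥ N₀`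
and every `r`-coloring of the length-`N` words over a `t`-letter alphabet, there is a
variable word `w` (a word over the alphabet together with `*`, in which `*` occurs)
whose combinatorial line `{w(i) : i ∈ [t]}` is monochromatic. -/
theorem stmt2 (t r : ℕ) (ht : 0 < t) (hr : 0 < r) :
    ∃ N₀ : ℕ, ∀ N : ℕ, N₀ ≤ N → ∀ χ : (Fin N → Fin t) → Fin r,
      ∃ w : Fin N → Option (Fin t), (∃ j, w j = none) ∧
        ∃ c : Fin r, ∀ i : Fin t, χ (fun j => (w j).getD i) = c :=
  stmt2_general t r ht
end

section
/- Let r and m be positive integers. There exists a positive integer N such that whenever the set of length N words over the alphabet [m] = {1,2,…,m} is colored with r colors, there is a variable word w(*) of length N that begins and ends with a constant (i.e., its first and last letters lie in [m]) such that {w(a) : a ∈ [m]} is monochromatic. -/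
/-- Strengthened Hales–Jewett: for `r, m ≥ 1` there is `N > 0` such that for every
`r`-coloring of the length-`N` words over `[m]` there is a variable word `w` which
begins and ends with a constant letter and whose line `{w(a) : a ∈ [m]}` is
monochromatic. (A letter `none` denotes the variable `*`.) -/
theorem stmt3 (r m : ℕ) (hr : 0 < r) (hm : 0 < m) :
    ∃ N : ℕ, ∃ hN : 0 < N, ∀ χ : (Fin N → Fin m) → Fin r,
      ∃ w : Fin N → Option (Fin m), (∃ j, w j = none) ∧
        (w ⟨0, hN⟩).isSome ∧ (w ⟨N - 1, Nat.sub_lt hN Nat.one_pos⟩).isSome ∧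
        ∃ c : Fin r, ∀ a : Fin m, χ (fun j => (w j).getD a) = c := by
  obtain ⟨ι, hfin, hι⟩ := Combinatorics.Line.exists_mono_in_high_dimension (Fin m) (Fin r)
  have : Fintype ι := hfin
  set n := Fintype.card ι with hn
  let e : Fin n ≃ ι := (Fintype.equivFin ι).symm
  refine ⟨n + 2, Nat.succ_pos _, fun χ => ?_⟩
  have hN : 0 < n + 2 := Nat.succ_pos _
  let z : Fin m := ⟨0, hm⟩
  -- extend a middle word to a full word with constant z at the ends
  let ext : (ι → Fin m) → (Fin (n + 2) → Fin m) := fun v j =>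
    if h : 1 ≤ (j : ℕ) ∧ (j : ℕ) ≤ n then v (e ⟨(j : ℕ) - 1, by omega⟩) else z
  obtain ⟨l, c, hc⟩ := hι (fun v => χ (ext v))
  refine ⟨fun j => if h : 1 ≤ (j : ℕ) ∧ (j : ℕ) ≤ n then l.idxFun (e ⟨(j : ℕ) - 1, by omega⟩)
      else some z, ?_, ?_, ?_, c, ?_⟩
  · obtain ⟨i, hi⟩ := l.proper
    refine ⟨⟨(e.symm i : ℕ) + 1, by have := (e.symm i).isLt; omega⟩, ?_⟩
    have h1 : 1 ≤ ((e.symm i : ℕ) + 1) ∧ ((e.symm i : ℕ) + 1) ≤ n := by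
      have := (e.symm i).isLt; omega
    simp only [dif_pos h1]
    have : (⟨(e.symm i : ℕ) + 1 - 1, by have := (e.symm i).isLt; omega⟩ : Fin n) = e.symm i := by
      ext; simp
    rw [this, Equiv.apply_symm_apply]
    exact hi
  · have h0 : ¬ (1 ≤ ((⟨0, hN⟩ : Fin (n+2)) : ℕ) ∧ ((⟨0, hN⟩ : Fin (n+2)) : ℕ) ≤ n) := by simp
    simp [dif_neg h0]
  · have h0 : ¬ (1 ≤ ((⟨n + 2 - 1, Nat.sub_lt hN Nat.one_pos⟩ : Fin (n+2)) : ℕ) ∧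
        ((⟨n + 2 - 1, Nat.sub_lt hN Nat.one_pos⟩ : Fin (n+2)) : ℕ) ≤ n) := by simp
    simp [dif_neg h0]
  · intro a
    have := hc a
    rw [← this]
    congr 1
    funext j
    by_cases h : 1 ≤ (j : ℕ) ∧ (j : ℕ) ≤ n
    · simp only [dif_pos h, ext]
      rfl
    · simp only [dif_neg h, ext]
      rfl
end

section
/- Let (S,+) be a commutative semigroup, let F be a finite nonempty subset of S, and let r be a positive integer. Then there exists a finite subset A of S such that for any r-coloring of A there exists a monochromatic homothetic copy of F contained in A, i.e., there are a ∈ S and n ∈ ℕ with a + n·F ⊆ A and a + n·F monochromatic. -/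
/-!
Adjoining a zero turns `S` into a commutative monoid `WithZero S`. There, the Hales–Jewett
theorem applied to the cube `F^ι`, colored through the summation map `v ↦ ∑ i, v i`, yields a
monochromatic combinatorial line; summing along it gives the homothetic copy `b + n • F`, where
`n` is the number of active coordinates and `b` the sum of the fixed ones. So the image of the
cube is a finite set with the required property. Translating everything by a fixed `x₀ ∈ F`
removes the possibly zero offset `b` and brings the copy back into `S`.
-/

/-- `pnsmul n x` is the sum of `x` with itself `n` times, for a positive integer `n`,
in an additive semigroup. -/
def pnsmul {S : Type*} [AddSemigroup S] (n : ℕ+) (x : S) : S :=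
  Nat.rec (motive := fun _ => S) x (fun _ y => y + x) n.natPred

open Finset

namespace Combinatorics.Line

theorem sum_apply {α ι M : Type*} [Fintype ι] [AddCommMonoid M] (l : Line α ι) (v : α → M)
    (x : α) :
    ∑ i, v (l x i) = #{i | l.idxFun i = none} • v x + ∑ i, (l.idxFun i).elim 0 v := by
  have h : ∀ i, v (l x i) = (if l.idxFun i = none then v x else 0) + (l.idxFun i).elim 0 v := by
    intro i
    rw [coe_apply]
    cases l.idxFun i <;> simp
  simp only [h, sum_add_distrib, ← sum_filter, sum_const]

end Combinatorics.Line

/-- Finite version of `Combinatorics.exists_mono_homothetic_copy`. -/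
theorem exists_finset_mono_homothetic_copy {M κ : Type*} [AddCommMonoid M] [Finite κ]
    (F : Finset M) :
    ∃ A : Finset M, ∀ C : M → κ, ∃ n > 0, ∃ (b : M) (c : κ),
      ∀ x ∈ F, n • x + b ∈ A ∧ C (n • x + b) = c := by
  classical
  obtain ⟨ι, _, hHJ⟩ := Combinatorics.Line.exists_mono_in_high_dimension F κ
  refine ⟨univ.image fun v : ι → F => ∑ i, (v i : M), fun C => ?_⟩
  obtain ⟨l, c, hl⟩ := hHJ fun v => C (∑ i, (v i : M))
  obtain ⟨i₀, hi₀⟩ := l.proper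
  refine ⟨#{i | l.idxFun i = none}, card_pos.2 ⟨i₀, by simpa using hi₀⟩,
    ∑ i, (l.idxFun i).elim 0 (↑), c, fun x hx => ?_⟩
  rw [← l.sum_apply Subtype.val ⟨x, hx⟩]
  exact ⟨mem_image_of_mem _ (mem_univ _), hl ⟨x, hx⟩⟩

namespace WithZero

variable {S : Type*} [AddSemigroup S]

theorem coe_pnsmul (n : ℕ+) (x : S) :
    ((pnsmul n x : S) : WithZero S) = (n : ℕ) • (x : WithZero S) := by
  rw [pnsmul, ← PNat.natPred_add_one n]
  induction n.natPred with
  | zero => simp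
  | succ m ih => rw [succ_nsmul, ← ih, ← coe_add]

/-- `x + s`, which lies in `S` even when `s = 0`. -/
def addLeft (x : S) : WithZero S → S :=
  recZeroCoe (motive := fun _ => S) x (x + ·)

theorem coe_addLeft (x : S) (s : WithZero S) :
    ((addLeft x s : S) : WithZero S) = (x : WithZero S) + s := by
  induction s using recZeroCoe <;> rfl

end WithZero

open WithZero in
theorem stmt4_general {S : Type*} [AddCommSemigroup S] (F : Finset S) (hF : F.Nonempty)
    (r : ℕ) :
    ∃ A : Finset S, ∀ χ : S → Fin r, ∃ a : S, ∃ n : ℕ+, ∃ c : Fin r,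
      ∀ x ∈ F, a + pnsmul n x ∈ A ∧ χ (a + pnsmul n x) = c := by
  classical
  obtain ⟨x₀, -⟩ := hF
  obtain ⟨A, hA⟩ :=
    exists_finset_mono_homothetic_copy (κ := Fin r) (F.image ((↑) : S → WithZero S))
  refine ⟨A.image (addLeft x₀), fun χ => ?_⟩
  obtain ⟨n, hn, b, c, hcopy⟩ := hA (χ ∘ addLeft x₀)
  lift n to ℕ+ using hn
  have hshift (x : S) : addLeft x₀ b + pnsmul n x = addLeft x₀ ((n : ℕ) • x + b) := by
    apply WithZero.coe_injective
    rw [WithZero.coe_add, coe_addLeft, coe_addLeft, coe_pnsmul]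
    abel
  refine ⟨addLeft x₀ b, n, c, fun x hx => ?_⟩
  obtain ⟨hmem, hcol⟩ := hcopy x (mem_image_of_mem _ hx)
  rw [hshift]
  exact ⟨mem_image_of_mem _ hmem, hcol⟩

/-- For any finite nonempty `F ⊆ S` and `r ≥ 1` there is a finite `A ⊆ S` such that
every `r`-coloring of `A` admits a monochromatic homothetic copy `a + n·F ⊆ A` of `F`. -/
theorem stmt4 {S : Type*} [AddCommSemigroup S] (F : Finset S) (hF : F.Nonempty)
    (r : ℕ) (hr : 0 < r) :
    ∃ A : Finset S, ∀ χ : S → Fin r, ∃ a : S, ∃ n : ℕ+, ∃ c : Fin r,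
      ∀ x ∈ F, a + pnsmul n x ∈ A ∧ χ (a + pnsmul n x) = c :=
  stmt4_general F hF r
end

section
/- Let (S,+) be a commutative semigroup and let F be a finite nonempty subset of S. Then for any piecewise syndetic set M ⊆ S, the set {(a,n) ∈ S × ℕ : a + n·F ⊆ M} is nonempty; in particular, M contains a homothetic copy of F. -/
/-!
Finite Gallai theorem via Hales–Jewett: for `k` colours there is a dimension `ι` such that every
`k`-colouring of the words `ι → F` has a monochromatic combinatorial line. Sending a word `v` to
`t + ∑ i, v i` maps a line with `n` moving coordinates onto a homothetic copy `a + n·F`, so the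
finite image `E` of all words has the property that every `k`-colouring of `E` contains a
monochromatic copy of `F`. For a piecewise syndetic `M`, thickness of `⋃ g ∈ G, (-g + M)` puts a
translate `E + z` inside it; colouring `e ∈ E` by a `g` with `g + e + z ∈ M` yields
`g + z + a + n·F ⊆ M`.
-/

open Finset Combinatorics

theorem Combinatorics.Line.sum_apply_s5 {α ι M : Type*} [Fintype ι] [AddCommMonoid M]
    (l : Line α ι) (f : α → M) (x : α) :
    ∑ i, f (l x i) = #{i | (l.idxFun i).isNone} • f x + ∑ i, ((l.idxFun i).map f).getD 0 := by
  have h (i : ι) : f (l x i) =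
      (if (l.idxFun i).isNone then f x else 0) + ((l.idxFun i).map f).getD 0 := by
    cases hi : l.idxFun i <;> simp [hi]
  simp only [h, sum_add_distrib, sum_ite, sum_const, smul_zero, add_zero]

section WithZero

variable {S : Type*} [AddCommSemigroup S]

theorem WithZero.coe_pnsmul_s5 (n : ℕ+) (x : S) :
    ((pnsmul n x : S) : WithZero S) = (n : ℕ) • (x : WithZero S) := by
  have h (k : ℕ) : ((Nat.rec (motive := fun _ => S) x (fun _ y => y + x) k : S) : WithZero S) =
      (k + 1) • (x : WithZero S) := by
    induction k with
    | zero => simp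
    | succ k ih => rw [succ_nsmul, ← ih, ← WithZero.coe_add]
  rw [pnsmul, h, PNat.natPred_add_one]

theorem WithZero.exists_coe_eq_coe_add (t : S) (w : WithZero S) :
    ∃ b : S, (b : WithZero S) = t + w := by
  cases w with
  | zero => exact ⟨t, (add_zero _).symm⟩
  | coe s => exact ⟨t + s, WithZero.coe_add t s⟩

end WithZero

theorem exists_finset_mono_homothetic_copy_s5 {S : Type*} [AddCommSemigroup S] (F : Finset S)
    (hF : F.Nonempty) (κ : Type*) [Finite κ] :
    ∃ E : Finset S, E.Nonempty ∧ ∀ U : κ → Set S, (E : Set S) ⊆ ⋃ k, U k →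
      ∃ k, ∃ (a : S) (n : ℕ+), ∀ x ∈ F, a + pnsmul n x ∈ U k := by
  classical
  obtain ⟨t, ht⟩ := hF
  obtain ⟨ι, _, hι⟩ := Line.exists_mono_in_high_dimension F κ
  -- a word `v` is sent to `t + ∑ i, v i`; the summand `t` keeps the sum inside `S`
  choose p hp using fun v : ι → F ↦
    WithZero.exists_coe_eq_coe_add t (∑ i, ((v i : S) : WithZero S))
  refine ⟨univ.image p, image_nonempty.2 (univ_nonempty_iff.2 ⟨fun _ ↦ ⟨t, ht⟩⟩), fun U hU ↦ ?_⟩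
  choose color hcolor using fun v ↦ Set.mem_iUnion.1 (hU (mem_image_of_mem p (mem_univ v)))
  obtain ⟨l, k, hl⟩ := hι color
  obtain ⟨a, ha⟩ := WithZero.exists_coe_eq_coe_add t
    (∑ i, ((l.idxFun i).map fun y : F ↦ ((y : S) : WithZero S)).getD 0)
  obtain ⟨n, hn⟩ : ∃ n : ℕ+, (n : ℕ) = #{i | (l.idxFun i).isNone} :=
    ⟨⟨_, card_pos.2 ⟨l.proper.choose, by simp [l.proper.choose_spec]⟩⟩, rfl⟩
  refine ⟨k, a, n, fun x hx ↦ ?_⟩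
  have hpl : p (l ⟨x, hx⟩) = a + pnsmul n x := by
    apply WithZero.coe_injective
    rw [hp, l.sum_apply_s5 (fun y : F ↦ ((y : S) : WithZero S)), WithZero.coe_add,
      WithZero.coe_pnsmul_s5, ha, hn]
    abel
  rw [← hpl, ← hl ⟨x, hx⟩]
  exact hcolor _

/-- Any piecewise syndetic subset of a commutative semigroup contains a homothetic copy
of any finite nonempty set `F`: the set `{(a, n) : a + n·F ⊆ M}` is nonempty. -/
theorem stmt5 {S : Type*} [AddCommSemigroup S] (F : Finset S) (hF : F.Nonempty)
    (M : Set S) (hM : PiecewiseSyndetic M) :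
    {p : S × ℕ+ | ∀ x ∈ F, p.1 + pnsmul p.2 x ∈ M}.Nonempty := by
  obtain ⟨G, -, hthick⟩ := hM
  obtain ⟨E, hE, hcopy⟩ := exists_finset_mono_homothetic_copy_s5 F hF G
  obtain ⟨z, hz⟩ := hthick E hE
  obtain ⟨g, a, n, hg⟩ := hcopy (fun g ↦ {s | (g : S) + (s + z) ∈ M}) fun e he ↦ by
    obtain ⟨g, hgG, hgM⟩ := hz e he
    exact Set.mem_iUnion.2 ⟨⟨g, hgG⟩, hgM⟩
  refine ⟨(g + (a + z), n), fun x hx ↦ ?_⟩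
  have hmem : (g : S) + (a + pnsmul n x + z) ∈ M := hg x hx
  rwa [add_right_comm a, ← add_assoc] at hmem
end

section
/- Let (S,+) be a commutative semigroup and let M ⊆ S × ℕ be piecewise syndetic in S × ℕ. Then for any x, y ∈ S and any positive integer t, the set {(a + n·x + y, n·t) : (a,n) ∈ M} is piecewise syndetic in S × ℕ. -/

lemma pnsmul_one' {S : Type*} [AddSemigroup S] (x : S) : pnsmul 1 x = x := rfl

lemma natrec_add' {S : Type*} [AddSemigroup S] (x : S) (a b : ℕ) :
    (Nat.rec (motive := fun _ => S) x (fun _ y => y + x) (a + b + 1) : S)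
      = Nat.rec (motive := fun _ => S) x (fun _ y => y + x) a
        + Nat.rec (motive := fun _ => S) x (fun _ y => y + x) b := by
  induction b with
  | zero => rfl
  | succ b ih =>
      show (Nat.rec (motive := fun _ => S) x (fun _ y => y + x) (a + b + 1) : S) + x = _
      rw [ih, add_assoc]

lemma pnsmul_add' {S : Type*} [AddSemigroup S] (n m : ℕ+) (x : S) :
    pnsmul (n + m) x = pnsmul n x + pnsmul m x := by
  have h : (n + m).natPred = n.natPred + m.natPred + 1 := by
    rcases n with ⟨n, hn⟩
    rcases m with ⟨m, hm⟩
    simp [PNat.natPred, PNat.add_coe]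
    have := PNat.add_coe ⟨n, hn⟩ ⟨m, hm⟩
    simp only [PNat.mk_coe] at this
    omega
  unfold pnsmul
  rw [h]
  exact natrec_add' x _ _


/-- If `M ⊆ S × ℕ⁺` is piecewise syndetic, then for any `x, y ∈ S` and `t ∈ ℕ⁺`,
`{(a + n·x + y, n·t) : (a, n) ∈ M}` is piecewise syndetic in `S × ℕ⁺`. -/
theorem stmt8 {S : Type*} [AddCommSemigroup S] (M : Set (S × ℕ+))
    (hM : PiecewiseSyndetic M) (x y : S) (t : ℕ+) :
    PiecewiseSyndetic
      ((fun p : S × ℕ+ => (p.1 + pnsmul p.2 x + y, p.2 * t)) '' M) := by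
  classical
  obtain ⟨G, hGne, hGth⟩ := hM
  set kf : ℕ+ → ℕ+ := fun m => ((m : ℕ) / (t : ℕ)).succPNat with hkf
  have hkmul : ∀ m : ℕ+, (m : ℕ) < (kf m : ℕ) * (t : ℕ) := by
    intro m
    have h1 : (m : ℕ) / t * t + (m : ℕ) % t = m := Nat.div_add_mod' _ _
    have h2 : (m : ℕ) % t < t := Nat.mod_lt _ t.pos
    have h3 : ((kf m : ℕ)) = (m : ℕ) / t + 1 := rfl
    rw [h3, Nat.succ_mul]
    omega
  set df : ℕ+ → ℕ+ := fun m => ⟨(kf m : ℕ) * t - m, by have := hkmul m; omega⟩ with hdf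
  have hdft : ∀ m : ℕ+, (df m : ℕ) ≤ t := by
    intro m
    have h1 : (df m : ℕ) = (kf m : ℕ) * t - m := rfl
    have h3 : ((kf m : ℕ)) = (m : ℕ) / t + 1 := rfl
    have h4 : (m : ℕ) / t * t ≤ m := Nat.div_mul_le_self _ _
    rw [h1, h3, Nat.succ_mul]
    omega
  have hdfk : ∀ m : ℕ+, (df m : ℕ) + m = (kf m : ℕ) * t := by
    intro m
    have h1 : (df m : ℕ) = (kf m : ℕ) * t - m := rfl
    have := hkmul m
    omega
  refine ⟨(G ×ˢ Finset.range t).image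
      (fun p => (p.1.1 + pnsmul p.1.2 x + y + x, p.1.2 * t + p.2.succPNat)), ?_, ?_⟩
  · exact Finset.Nonempty.image (hGne.product ⟨0, Finset.mem_range.2 t.pos⟩) _
  · intro E' hE'
    set PnN : ℕ := (E'.image fun e' => ((kf e'.2 : ℕ))).max' (hE'.image _) + 1 with hPnN
    have hklt : ∀ e' ∈ E', (kf e'.2 : ℕ) < PnN := by
      intro e' he'
      have hmem : ((kf e'.2 : ℕ)) ∈ E'.image (fun e' => ((kf e'.2 : ℕ))) :=
        Finset.mem_image_of_mem _ he'
      have := Finset.le_max' _ ((kf e'.2 : ℕ)) hmem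
      omega
    set pf : ℕ+ → ℕ+ := fun m => (PnN - (kf m : ℕ)).toPNat' with hpf
    obtain ⟨z, hz⟩ := hGth (E'.image (fun e' => (e'.1 + pnsmul (pf e'.2) x, kf e'.2)))
      (hE'.image _)
    obtain ⟨z1, z2⟩ := z
    have hz2 : 0 < (z2 : ℕ) := z2.2
    have hPn1 : 1 ≤ PnN := by rw [hPnN]; exact Nat.le_add_left 1 _
    set q : ℕ+ := ⟨PnN + (z2 : ℕ) - 1, by omega⟩ with hq
    refine ⟨(z1 + pnsmul q x, z2 * t), ?_⟩
    rintro ⟨c, m⟩ he'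
    obtain ⟨g, hgG, hgM⟩ := hz _ (Finset.mem_image_of_mem _ he')
    obtain ⟨g1, g2⟩ := g
    have hkltm : (kf m : ℕ) < PnN := hklt (c, m) he'
    have hpfc : (pf m : ℕ) = PnN - (kf m : ℕ) := by
      have h1 : (pf m : ℕ) = ((PnN - (kf m : ℕ)).toPNat' : ℕ) := rfl
      rw [h1, Nat.toPNat'_coe, if_pos (by omega)]
    refine ⟨(g1 + pnsmul g2 x + y + x, g2 * t + df m), ?_, ?_⟩
    · refine Finset.mem_image.2 ⟨((g1, g2), (df m : ℕ) - 1), ?_, ?_⟩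
      · refine Finset.mem_product.2 ⟨hgG, Finset.mem_range.2 ?_⟩
        show (df m : ℕ) - 1 < (t : ℕ)
        have h5 := hdft m
        have h6 : 0 < (df m : ℕ) := (df m).2
        omega
      · have hd : ((df m : ℕ) - 1).succPNat = df m := by
          apply PNat.coe_injective
          have h6 : 0 < (df m : ℕ) := (df m).2
          simp [Nat.succPNat]
          omega
        simp only [hd]
    · refine ⟨(g1, g2) + ((c + pnsmul (pf m) x, kf m) + (z1, z2)), hgM, ?_⟩
      have key : pf m + (kf m + z2) = 1 + q := by
        apply PNat.coe_injective
        simp only [PNat.add_coe, PNat.one_coe, hpfc]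
        have h1 : (q : ℕ) = PnN + (z2 : ℕ) - 1 := rfl
        have := z2.2
        omega
      simp only [Prod.mk_add_mk, Prod.mk.injEq]
      constructor
      · show g1 + (c + pnsmul (pf m) x + z1) + pnsmul (g2 + (kf m + z2)) x + y
            = g1 + pnsmul g2 x + y + x + (c + (z1 + pnsmul q x))
        have hpk : pnsmul (pf m) x + pnsmul (g2 + (kf m + z2)) x
            = pnsmul g2 x + (x + pnsmul q x) := by
          rw [← pnsmul_add']
          have harr : pf m + (g2 + (kf m + z2)) = g2 + (1 + q) := by
            rw [← key]
            exact add_left_comm _ _ _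
          rw [harr, pnsmul_add', pnsmul_add', pnsmul_one']
        revert hpk
        generalize pnsmul (pf m) x = P1
        generalize pnsmul (g2 + (kf m + z2)) x = PA
        generalize pnsmul g2 x = Pg
        generalize pnsmul q x = Q
        intro hpk
        calc g1 + (c + P1 + z1) + PA + y
            = (P1 + PA) + (g1 + (c + (z1 + y))) := by ac_rfl
          _ = (Pg + (x + Q)) + (g1 + (c + (z1 + y))) := by rw [hpk]
          _ = g1 + Pg + y + x + (c + (z1 + Q)) := by ac_rfl
      · show (g2 + (kf m + z2)) * t = g2 * t + df m + (m + z2 * t)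
        apply PNat.coe_injective
        simp only [PNat.mul_coe, PNat.add_coe]
        have h1 := hdfk m
        have e1 : ((g2 : ℕ) + ((kf m : ℕ) + (z2 : ℕ))) * (t : ℕ)
            = (g2 : ℕ) * t + ((kf m : ℕ) * t + (z2 : ℕ) * t) := by ring
        rw [e1, ← h1]
        ring
end

section
/- Every piecewise syndetic subset A of the positive integers ℕ contains arbitrarily long arithmetic progressions: for every k ∈ ℕ there exist a, d ∈ ℕ with {a, a+d, a+2d, …, a+(k−1)d} ⊆ A. -/
/-- A finitary van der Waerden theorem, derived from Hales–Jewett. -/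
lemma vdw_bounded (k : ℕ) (κ : Type*) [Finite κ] :
    ∃ N : ℕ, ∀ C : ℕ → κ, ∃ a, 0 < a ∧ ∃ b, a * (k - 1) + b ≤ N ∧
      ∃ c, ∀ s < k, C (a * s + b) = c := by
  classical
  obtain ⟨ι, _inst, hι⟩ := Combinatorics.Line.exists_mono_in_high_dimension (Fin k) κ
  refine ⟨Fintype.card ι * (k - 1), fun C => ?_⟩
  obtain ⟨l, c, hl⟩ := hι fun v => C (∑ i, (v i : ℕ))
  set s : Finset ι := Finset.univ.filter (fun i => l.idxFun i = none) with hs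
  set a := s.card with hacard
  set b := ∑ i ∈ sᶜ, ((l.idxFun i).map (fun m : Fin k => (m : ℕ))).getD 0 with hb
  have ha : 0 < a := Finset.card_pos.mpr ⟨l.proper.choose, by
    rw [hs, Finset.mem_filter]; exact ⟨Finset.mem_univ _, l.proper.choose_spec⟩⟩
  have key : ∀ x : Fin k, ∑ i, (((l.idxFun i).getD x : Fin k) : ℕ) = a * x + b := by
    intro x
    rw [← Finset.sum_add_sum_compl s]
    congr 1
    · have heach : ∀ i ∈ s, (((l.idxFun i).getD x : Fin k) : ℕ) = (x : ℕ) := by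
        intro i hi
        rw [hs, Finset.mem_filter] at hi
        rw [hi.right]
        rfl
      rw [Finset.sum_congr rfl heach, Finset.sum_const, smul_eq_mul, hacard, mul_comm]
    · refine Finset.sum_congr rfl fun i hi => ?_
      rw [hs, Finset.compl_filter, Finset.mem_filter] at hi
      obtain ⟨y, hy⟩ := Option.ne_none_iff_exists.mp hi.right
      rw [← hy]
      simp
  have hble : b ≤ sᶜ.card * (k - 1) := by
    rw [hb]
    calc ∑ i ∈ sᶜ, ((l.idxFun i).map (fun m : Fin k => (m : ℕ))).getD 0
        ≤ ∑ _i ∈ sᶜ, (k - 1) := by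
          apply Finset.sum_le_sum
          intro i _
          cases hv : l.idxFun i with
          | none => simp
          | some y => simpa using Nat.le_sub_one_of_lt y.isLt
      _ = sᶜ.card * (k - 1) := by rw [Finset.sum_const, smul_eq_mul]
  refine ⟨a, ha, b, ?_, c, ?_⟩
  · calc a * (k - 1) + b ≤ s.card * (k - 1) + sᶜ.card * (k - 1) :=
          Nat.add_le_add_left hble _
      _ = (s.card + sᶜ.card) * (k - 1) := by ring
      _ = Fintype.card ι * (k - 1) := by rw [Finset.card_add_card_compl]
  · intro t ht
    have h2 := hl ⟨t, ht⟩
    dsimp only at h2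
    change C (∑ i, (((l.idxFun i).getD ⟨t, ht⟩ : Fin k) : ℕ)) = c at h2
    rw [key ⟨t, ht⟩] at h2
    simpa using h2

/-- Every piecewise syndetic subset of the positive integers contains arbitrarily long
arithmetic progressions `{a, a + d, …, a + (k-1)d}`. -/
theorem stmt10 (A : Set ℕ+) (hA : PiecewiseSyndetic A) :
    ∀ k : ℕ, ∃ a d : ℕ+, ∀ i : ℕ, i < k →
      ∃ b ∈ A, (b : ℕ) = (a : ℕ) + i * (d : ℕ) := by
  intro k
  obtain ⟨G, hG, hthick⟩ := hA
  obtain ⟨N, hN⟩ := vdw_bounded k {g // g ∈ G}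
  set E : Finset ℕ+ := (Finset.range (N + 1)).image (fun m => m.succPNat) with hE
  have hEne : E.Nonempty := ⟨Nat.succPNat 0, by
    rw [hE]; exact Finset.mem_image.mpr ⟨0, Finset.mem_range.mpr (Nat.succ_pos N), rfl⟩⟩
  obtain ⟨z, hz⟩ := hthick E hEne
  have hwit : ∀ m : ℕ, m ≤ N → ∃ g : {g // g ∈ G},
      (g : ℕ+) + (m.succPNat + z) ∈ A := by
    intro m hm
    have hmE : m.succPNat ∈ E := by
      rw [hE]; exact Finset.mem_image.mpr ⟨m, Finset.mem_range.mpr (Nat.lt_succ_of_le hm), rfl⟩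
    obtain ⟨g, hgG, hg⟩ := hz _ hmE
    exact ⟨⟨g, hgG⟩, hg⟩
  classical
  obtain ⟨g0, hg0⟩ := hG
  set C : ℕ → {g // g ∈ G} := fun m =>
    if h : m ≤ N then (hwit m h).choose else ⟨g0, hg0⟩ with hC
  obtain ⟨a, ha, b, hab, c, hc⟩ := hN C
  refine ⟨(c : ℕ+) + (b.succPNat + z), ⟨a, ha⟩, ?_⟩
  intro i hi
  have hle : a * i + b ≤ N := by
    have h1 : a * i ≤ a * (k - 1) := Nat.mul_le_mul_left a (by omega)
    omega
  have hCc : C (a * i + b) = c := hc i hi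
  rw [hC] at hCc
  simp only [dif_pos hle] at hCc
  have hspec := (hwit (a * i + b) hle).choose_spec
  rw [hCc] at hspec
  refine ⟨_, hspec, ?_⟩
  simp only [PNat.add_coe, Nat.succPNat_coe, PNat.mk_coe, Nat.succ_eq_add_one]
  ring
end

section
/- Let (S,+) be a commutative semigroup, let T ⊆ S be a thick subset, and let A be a finite nonempty subset of S. Then the set B = {(a,n) ∈ S × ℕ : a + n·A ⊆ T} is thick in the commutative semigroup S × ℕ. -/
/-!
Given a finite `E ⊆ S × ℕ⁺`, thickness of `T` yields one `z` translating every element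
`a + (n + 1)·x` (with `(a, n) ∈ E`, `x ∈ A`) into `T`. Then `(z, 1)` translates `E` into `B`,
because `(a + z) + (n + 1)·x = (a + (n + 1)·x) + z`.
-/

theorem Thick.exists_forall_add_mem {T : Type*} [AddCommSemigroup T] [Nonempty T] {A : Set T}
    (hA : Thick A) (E : Finset T) : ∃ z : T, ∀ e ∈ E, e + z ∈ A := by
  rcases E.eq_empty_or_nonempty with rfl | hE
  · exact ⟨Classical.arbitrary T, by simp⟩
  · exact hA E hE

theorem stmt15_general {S : Type*} [AddCommSemigroup S] (T : Set S) (hT : Thick T)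
    (A : Finset S) :
    Thick {p : S × ℕ+ | ∀ x ∈ A, p.1 + pnsmul p.2 x ∈ T} := by
  classical
  rintro E ⟨e₀, -⟩
  have : Nonempty S := ⟨e₀.1⟩
  obtain ⟨z, hz⟩ := hT.exists_forall_add_mem
    ((E ×ˢ A).image fun q => q.1.1 + pnsmul (q.1.2 + 1) q.2)
  refine ⟨(z, 1), fun e he x hx => ?_⟩
  have hex : (e, x) ∈ E ×ˢ A := Finset.mem_product.2 ⟨he, hx⟩
  have hmem := hz _ (Finset.mem_image_of_mem _ hex)
  simpa only [Prod.fst_add, Prod.snd_add, add_right_comm] using hmem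

/-- If `T ⊆ S` is thick and `A ⊆ S` is finite nonempty, then
`B = {(a, n) ∈ S × ℕ⁺ : a + n·A ⊆ T}` is thick in `S × ℕ⁺`. -/
theorem stmt15 {S : Type*} [AddCommSemigroup S] (T : Set S) (hT : Thick T)
    (A : Finset S) (hA : A.Nonempty) :
    Thick {p : S × ℕ+ | ∀ x ∈ A, p.1 + pnsmul p.2 x ∈ T} :=
  stmt15_general T hT A
end
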